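/- arXiv:2411.09653 — 3 statements merged into one kernel-verified Lean document; each statement's English description precedes it below -/
import Mathlib

section
/- Let m ∈ ℝ^n, y ∈ ℝ^m, H an m×n real matrix, and let Σ (n×n) and R (m×m) be symmetric positive definite matrices. Define J(x) := (x−m)ᵀΣ⁻¹(x−m) + (y−Hx)ᵀR⁻¹(y−Hx) for x ∈ ℝ^n, and K := ΣHᵀ(HΣHᵀ+R)⁻¹. Then x* := m + K(y−Hm) is the unique minimizer of J over ℝ^n. -/
/-!
Completing the square: writing `A = Σ⁻¹ + Hᵀ R⁻¹ H`, the cost satisfies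
`J x = J x₀ + (x - x₀)ᵀ A (x - x₀)` for every stationary point `x₀` of `J`, i.e. every solution of
`Σ⁻¹ (x₀ - m) = Hᵀ R⁻¹ (y - H x₀)`. The push-through identity `A K = Hᵀ R⁻¹` shows that the
Kalman update is stationary, and `A` is positive definite.
-/

open Matrix

namespace Matrix

variable {ι κ α : Type*} [Fintype ι] [Fintype κ] [CommRing α]

lemma IsSymm.add_dotProduct_mulVec_add {M : Matrix ι ι α} (hM : M.IsSymm) (a b : ι → α) :
    (a + b) ⬝ᵥ M *ᵥ (a + b) = a ⬝ᵥ M *ᵥ a + 2 * (b ⬝ᵥ M *ᵥ a) + b ⬝ᵥ M *ᵥ b := by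
  have hab : a ⬝ᵥ M *ᵥ b = b ⬝ᵥ M *ᵥ a := by
    rw [← dotProduct_transpose_mulVec, hM.eq]
  simp only [mulVec_add, dotProduct_add, add_dotProduct, hab]
  ring

end Matrix

section Kalman

variable {ι κ α : Type*} [Fintype ι] [Fintype κ] [CommRing α]

def kalmanCost (P : Matrix ι ι α) (Q : Matrix κ κ α) (H : Matrix κ ι α) (m : ι → α)
    (y : κ → α) (x : ι → α) : α :=
  (x - m) ⬝ᵥ P *ᵥ (x - m) + (y - H *ᵥ x) ⬝ᵥ Q *ᵥ (y - H *ᵥ x)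

theorem kalmanCost_eq_add_of_stationary {P : Matrix ι ι α} {Q : Matrix κ κ α}
    (hP : P.IsSymm) (hQ : Q.IsSymm) (H : Matrix κ ι α) (m : ι → α) (y : κ → α) {x₀ : ι → α}
    (hx₀ : P *ᵥ (x₀ - m) = Hᵀ *ᵥ Q *ᵥ (y - H *ᵥ x₀)) (x : ι → α) :
    kalmanCost P Q H m y x =
      kalmanCost P Q H m y x₀ + (x - x₀) ⬝ᵥ (P + Hᵀ * Q * H) *ᵥ (x - x₀) := by
  set d := x - x₀
  have hprior : x - m = (x₀ - m) + d := by simp only [d]; abel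
  have hresidual : y - H *ᵥ x = (y - H *ᵥ x₀) + -(H *ᵥ d) := by
    simp only [d, mulVec_sub]; abel
  have hcross : d ⬝ᵥ P *ᵥ (x₀ - m) + -(H *ᵥ d) ⬝ᵥ Q *ᵥ (y - H *ᵥ x₀) = 0 := by
    rw [neg_dotProduct, dotProduct_comm (H *ᵥ d), ← dotProduct_transpose_mulVec H d, hx₀,
      add_neg_cancel]
  have hquad : -(H *ᵥ d) ⬝ᵥ Q *ᵥ -(H *ᵥ d) = d ⬝ᵥ (Hᵀ * Q * H) *ᵥ d := by
    rw [mulVec_neg, dotProduct_neg, neg_dotProduct, neg_neg, dotProduct_comm (H *ᵥ d),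
      ← dotProduct_transpose_mulVec H d, ← mulVec_mulVec, ← mulVec_mulVec]
  unfold kalmanCost
  rw [hprior, hresidual, hP.add_dotProduct_mulVec_add, hQ.add_dotProduct_mulVec_add, hquad,
    add_mulVec, dotProduct_add]
  linear_combination 2 * hcross

variable [DecidableEq ι] [DecidableEq κ]

noncomputable def kalmanGain (S : Matrix ι ι α) (R : Matrix κ κ α) (H : Matrix κ ι α) :
    Matrix ι κ α :=
  S * Hᵀ * (H * S * Hᵀ + R)⁻¹

theorem inv_add_transpose_mul_inv_mul_mul_kalmanGain {S : Matrix ι ι α} {R : Matrix κ κ α}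
    (H : Matrix κ ι α) (hS : IsUnit S.det) (hR : IsUnit R.det)
    (hSR : IsUnit (H * S * Hᵀ + R).det) :
    (S⁻¹ + Hᵀ * R⁻¹ * H) * kalmanGain S R H = Hᵀ * R⁻¹ := by
  have hpush : (S⁻¹ + Hᵀ * R⁻¹ * H) * (S * Hᵀ) = Hᵀ * R⁻¹ * (H * S * Hᵀ + R) := by
    rw [Matrix.add_mul, Matrix.mul_add, nonsing_inv_mul_cancel_left _ _ hS,
      nonsing_inv_mul_cancel_right _ _ hR, add_comm]
    simp only [Matrix.mul_assoc]
  rw [kalmanGain, ← Matrix.mul_assoc, hpush, mul_nonsing_inv_cancel_right _ _ hSR]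

theorem kalmanUpdate_stationary {S : Matrix ι ι α} {R : Matrix κ κ α} (H : Matrix κ ι α)
    (hS : IsUnit S.det) (hR : IsUnit R.det) (hSR : IsUnit (H * S * Hᵀ + R).det)
    {m x : ι → α} {y : κ → α} (hx : x = m + kalmanGain S R H *ᵥ (y - H *ᵥ m)) :
    S⁻¹ *ᵥ (x - m) = Hᵀ *ᵥ R⁻¹ *ᵥ (y - H *ᵥ x) := by
  subst hx
  have h := congrArg (· *ᵥ (y - H *ᵥ m))
    (inv_add_transpose_mul_inv_mul_mul_kalmanGain H hS hR hSR)
  simp only [add_mulVec, ← mulVec_mulVec] at h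
  rw [add_sub_cancel_left, mulVec_add, ← sub_sub, mulVec_sub R⁻¹, mulVec_sub Hᵀ]
  exact eq_sub_of_add_eq h

end Kalman

/-- **Kalman filter update as the unique minimizer of the quadratic cost.**
For `m ∈ ℝ^n`, `y ∈ ℝ^m`, an `m × n` matrix `H`, and symmetric positive definite
`Σ` (`n × n`) and `R` (`m × m`), the function
`J(x) = (x−m)ᵀ Σ⁻¹ (x−m) + (y−Hx)ᵀ R⁻¹ (y−Hx)` has
`x* = m + K (y − H m)`, with Kalman gain `K = Σ Hᵀ (H Σ Hᵀ + R)⁻¹`, as its unique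
minimizer over `ℝ^n`. -/
theorem kalman_update_unique_minimizer {n m : ℕ}
    (mv : Fin n → ℝ) (y : Fin m → ℝ)
    (H : Matrix (Fin m) (Fin n) ℝ)
    (S : Matrix (Fin n) (Fin n) ℝ) (R : Matrix (Fin m) (Fin m) ℝ)
    (hS : S.PosDef) (hR : R.PosDef)
    (J : (Fin n → ℝ) → ℝ)
    (hJ : ∀ x, J x = (x - mv) ⬝ᵥ (S⁻¹).mulVec (x - mv)
        + (y - H.mulVec x) ⬝ᵥ (R⁻¹).mulVec (y - H.mulVec x))
    (K : Matrix (Fin n) (Fin m) ℝ)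
    (hK : K = S * Hᵀ * (H * S * Hᵀ + R)⁻¹)
    (xstar : Fin n → ℝ)
    (hxstar : xstar = mv + K.mulVec (y - H.mulVec mv)) :
    (∀ x, J xstar ≤ J x) ∧ (∀ x, x ≠ xstar → J xstar < J x) := by
  obtain rfl : J = kalmanCost S⁻¹ R⁻¹ H mv y := funext hJ
  obtain rfl : K = kalmanGain S R H := hK
  have hSR : (H * S * Hᵀ + R).PosDef := by
    simpa using PosDef.posSemidef_add (hS.posSemidef.mul_mul_conjTranspose_same H) hR
  have hA : (S⁻¹ + Hᵀ * R⁻¹ * H).PosDef := by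
    simpa using hS.inv.add_posSemidef (hR.inv.posSemidef.conjTranspose_mul_mul_same H)
  have hstat := kalmanUpdate_stationary H ((isUnit_iff_isUnit_det S).mp hS.isUnit)
    ((isUnit_iff_isUnit_det R).mp hR.isUnit) ((isUnit_iff_isUnit_det _).mp hSR.isUnit) hxstar
  have hcost := kalmanCost_eq_add_of_stationary (isHermitian_iff_isSymm.mp hS.inv.isHermitian)
    (isHermitian_iff_isSymm.mp hR.inv.isHermitian) H mv y hstat
  refine ⟨fun x => ?_, fun x hx => ?_⟩
  · have := hA.posSemidef.dotProduct_mulVec_nonneg (x - xstar)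
    rw [star_trivial] at this
    linarith [hcost x]
  · have := hA.dotProduct_mulVec_pos (sub_ne_zero.mpr hx)
    rw [star_trivial] at this
    linarith [hcost x]
end

section
/- Let X̄ be a square-integrable random vector on ℝ^n with mean m and covariance Σ, and let W̄ be a square-integrable random vector on ℝ^m, independent of X̄, with mean 0 and covariance R. Let H be an m×n matrix such that HΣHᵀ + R is invertible, set Ȳ := HX̄ + W̄ and K := ΣHᵀ(HΣHᵀ+R)⁻¹. Then for every y ∈ ℝ^m, the random vector X̄_{|y} := X̄ + K(y − Ȳ) has mean E[X̄_{|y}] = m + K(y − Hm) and covariance Cov(X̄_{|y}) = Σ − ΣHᵀ(HΣHᵀ+R)⁻¹HΣ. -/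
open MeasureTheory ProbabilityTheory Matrix
open scoped Matrix ENNReal

/-!
The update error `X̄_{|y} - (m + K(y - Hm))` equals `(1 - KH)(X̄ - m) - K W̄`, a linear image of
two centred vectors that independence makes uncorrelated. Hence the error has mean zero and
covariance `(1 - KH) Σ (1 - KH)ᵀ + K R Kᵀ` (the Joseph form), and the gain equation
`K (HΣHᵀ + R) = ΣHᵀ` collapses this to `Σ - KHΣ`.
-/

section SecondMoments

variable {Ω ι κ ι' κ' : Type*} [MeasurableSpace Ω] {P : Measure Ω}

variable (P) in
noncomputable def crossMoment (U : Ω → ι → ℝ) (V : Ω → κ → ℝ) : Matrix ι κ ℝ :=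
  Matrix.of fun i j => ∫ ω, U ω i * V ω j ∂P

lemma memLp_mulVec_apply [Fintype κ] {p : ℝ≥0∞} {U : Ω → κ → ℝ}
    (hU : ∀ j, MemLp (fun ω => U ω j) p P) (A : Matrix ι κ ℝ) (i : ι) :
    MemLp (fun ω => (A *ᵥ U ω) i) p P :=
  memLp_finsetSum _ fun j _ => (hU j).const_mul (A i j)

lemma integrable_mulVec_apply [Fintype κ] {U : Ω → κ → ℝ}
    (hU : ∀ j, Integrable (fun ω => U ω j) P) (A : Matrix ι κ ℝ) (i : ι) :
    Integrable (fun ω => (A *ᵥ U ω) i) P :=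
  integrable_finsetSum _ fun j _ => (hU j).const_mul (A i j)

lemma integral_mulVec_apply [Fintype κ] {U : Ω → κ → ℝ}
    (hU : ∀ j, Integrable (fun ω => U ω j) P) (A : Matrix ι κ ℝ) (i : ι) :
    ∫ ω, (A *ᵥ U ω) i ∂P = (A *ᵥ fun j => ∫ ω, U ω j ∂P) i := by
  simp only [mulVec, dotProduct]
  rw [integral_finsetSum _ fun j _ => (hU j).const_mul _]
  simp only [integral_const_mul]

lemma integral_add_mulVec_sub_mulVec_apply [IsProbabilityMeasure P] [Fintype ι] [Fintype κ]
    {U : Ω → ι → ℝ} {V : Ω → κ → ℝ}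
    (hU : ∀ i, Integrable (fun ω => U ω i) P) (hV : ∀ j, Integrable (fun ω => V ω j) P)
    (hU0 : ∀ i, ∫ ω, U ω i ∂P = 0) (hV0 : ∀ j, ∫ ω, V ω j ∂P = 0)
    (c : ι' → ℝ) (A : Matrix ι' ι ℝ) (B : Matrix ι' κ ℝ) (i : ι') :
    ∫ ω, (c + (A *ᵥ U ω - B *ᵥ V ω)) i ∂P = c i := by
  have hAU := integrable_mulVec_apply hU A i
  have hBV := integrable_mulVec_apply hV B i
  have hAUBV : Integrable (fun ω => (A *ᵥ U ω) i - (B *ᵥ V ω) i) P := hAU.sub hBV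
  simp only [Pi.add_apply, Pi.sub_apply]
  rw [integral_add (integrable_const (c i)) hAUBV, integral_sub hAU hBV,
    integral_mulVec_apply hU, integral_mulVec_apply hV]
  simp [hU0, hV0, ← Pi.zero_def]

lemma crossMoment_mulVec [Fintype ι] [Fintype κ] {U : Ω → ι → ℝ} {V : Ω → κ → ℝ}
    (hU : ∀ i, MemLp (fun ω => U ω i) 2 P) (hV : ∀ j, MemLp (fun ω => V ω j) 2 P)
    (A : Matrix ι' ι ℝ) (B : Matrix κ' κ ℝ) :
    crossMoment P (fun ω => A *ᵥ U ω) (fun ω => B *ᵥ V ω) = A * crossMoment P U V * Bᵀ := by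
  ext i j
  have hUV : ∀ k l, Integrable (fun ω => U ω k * V ω l) P :=
    fun k l => (hU k).integrable_mul (hV l)
  calc ∫ ω, (A *ᵥ U ω) i * (B *ᵥ V ω) j ∂P
      = ∫ ω, ∑ k, ∑ l, A i k * B j l * (U ω k * V ω l) ∂P := by
        congr 1; ext ω
        simp only [mulVec, dotProduct, Finset.sum_mul_sum]
        exact Finset.sum_congr rfl fun k _ => Finset.sum_congr rfl fun l _ => by ring
    _ = ∑ k, ∑ l, A i k * B j l * ∫ ω, U ω k * V ω l ∂P := by
        rw [integral_finsetSum _ fun k _ =>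
          integrable_finsetSum _ fun l _ => (hUV k l).const_mul _]
        refine Finset.sum_congr rfl fun k _ => ?_
        rw [integral_finsetSum _ fun l _ => (hUV k l).const_mul _]
        simp only [integral_const_mul]
    _ = (A * crossMoment P U V * Bᵀ) i j := by
        simp only [mul_apply, transpose_apply, crossMoment, of_apply, Finset.sum_mul]
        rw [Finset.sum_comm]
        exact Finset.sum_congr rfl fun k _ => Finset.sum_congr rfl fun l _ => by ring

lemma crossMoment_sub_left {U U' : Ω → ι → ℝ} {V : Ω → κ → ℝ}
    (hU : ∀ i, MemLp (fun ω => U ω i) 2 P) (hU' : ∀ i, MemLp (fun ω => U' ω i) 2 P)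
    (hV : ∀ j, MemLp (fun ω => V ω j) 2 P) :
    crossMoment P (U - U') V = crossMoment P U V - crossMoment P U' V := by
  ext i j
  simp only [crossMoment, of_apply, Matrix.sub_apply, Pi.sub_apply, sub_mul]
  exact integral_sub ((hU i).integrable_mul (hV j)) ((hU' i).integrable_mul (hV j))

lemma crossMoment_sub_right {U : Ω → ι → ℝ} {V V' : Ω → κ → ℝ}
    (hU : ∀ i, MemLp (fun ω => U ω i) 2 P) (hV : ∀ j, MemLp (fun ω => V ω j) 2 P)
    (hV' : ∀ j, MemLp (fun ω => V' ω j) 2 P) :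
    crossMoment P U (V - V') = crossMoment P U V - crossMoment P U V' := by
  ext i j
  simp only [crossMoment, of_apply, Matrix.sub_apply, Pi.sub_apply, mul_sub]
  exact integral_sub ((hU i).integrable_mul (hV j)) ((hU i).integrable_mul (hV' j))

lemma crossMoment_eq_zero_of_indepFun {U : Ω → ι → ℝ} {V : Ω → κ → ℝ} (hUV : IndepFun U V P)
    (hU : ∀ i, AEStronglyMeasurable (fun ω => U ω i) P)
    (hV : ∀ j, AEStronglyMeasurable (fun ω => V ω j) P) (hU0 : ∀ i, ∫ ω, U ω i ∂P = 0) :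
    crossMoment P U V = 0 := by
  ext i j
  have hij : IndepFun (fun ω => U ω i) (fun ω => V ω j) P :=
    hUV.comp (measurable_pi_apply i) (measurable_pi_apply j)
  simp only [crossMoment, of_apply, Matrix.zero_apply,
    hij.integral_fun_mul_eq_mul_integral (hU i) (hV j), hU0, zero_mul]

lemma crossMoment_mulVec_sub_mulVec [Fintype ι] [Fintype κ] {U : Ω → ι → ℝ} {V : Ω → κ → ℝ}
    (hU : ∀ i, MemLp (fun ω => U ω i) 2 P) (hV : ∀ j, MemLp (fun ω => V ω j) 2 P)
    (hUV : crossMoment P U V = 0) (hVU : crossMoment P V U = 0)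
    (A : Matrix ι' ι ℝ) (B : Matrix ι' κ ℝ) :
    crossMoment P (fun ω => A *ᵥ U ω - B *ᵥ V ω) (fun ω => A *ᵥ U ω - B *ᵥ V ω)
      = A * crossMoment P U U * Aᵀ + B * crossMoment P V V * Bᵀ := by
  have hAU := memLp_mulVec_apply hU A
  have hBV := memLp_mulVec_apply hV B
  change crossMoment P ((fun ω => A *ᵥ U ω) - fun ω => B *ᵥ V ω)
    ((fun ω => A *ᵥ U ω) - fun ω => B *ᵥ V ω) = _
  rw [crossMoment_sub_left (V := _ - _) hAU hBV fun i => (hAU i).sub (hBV i),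
    crossMoment_sub_right hAU hAU hBV, crossMoment_sub_right hBV hAU hBV,
    crossMoment_mulVec hU hU, crossMoment_mulVec hU hV, crossMoment_mulVec hV hU,
    crossMoment_mulVec hV hV, hUV, hVU]
  simp only [Matrix.mul_zero, Matrix.zero_mul, sub_zero, zero_sub, sub_neg_eq_add]

end SecondMoments

section KalmanAlgebra

variable {ι κ 𝕜 : Type*} [Fintype ι] [Fintype κ] [DecidableEq ι] [CommRing 𝕜]

lemma kalman_update_eq_add (H : Matrix κ ι 𝕜) (K : Matrix ι κ 𝕜) (x m : ι → 𝕜) (w y : κ → 𝕜) :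
    x + K *ᵥ (y - (H *ᵥ x + w))
      = m + K *ᵥ (y - H *ᵥ m) + ((1 - K * H) *ᵥ (x - m) - K *ᵥ w) := by
  simp only [mulVec_sub, mulVec_add, sub_mulVec, one_mulVec, ← mulVec_mulVec]
  abel

lemma kalman_joseph_form (S : Matrix ι ι 𝕜) (R : Matrix κ κ 𝕜) (H : Matrix κ ι 𝕜)
    (K : Matrix ι κ 𝕜) (hK : K * (H * S * Hᵀ + R) = S * Hᵀ) :
    (1 - K * H) * S * (1 - K * H)ᵀ + K * R * Kᵀ = S - K * H * S := by
  have hgain : K * (H * (S * (Hᵀ * Kᵀ))) + K * (R * Kᵀ) = S * (Hᵀ * Kᵀ) := by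
    simpa only [Matrix.mul_add, Matrix.add_mul, Matrix.mul_assoc] using congrArg (· * Kᵀ) hK
  calc (1 - K * H) * S * (1 - K * H)ᵀ + K * R * Kᵀ
      = S - S * (Hᵀ * Kᵀ) - K * (H * S) + (K * (H * (S * (Hᵀ * Kᵀ))) + K * (R * Kᵀ)) := by
        simp only [transpose_sub, transpose_mul, transpose_one, Matrix.sub_mul, Matrix.mul_sub,
          Matrix.one_mul, Matrix.mul_one, Matrix.mul_assoc]
        abel
    _ = S - K * H * S := by rw [hgain, Matrix.mul_assoc K]; abel

end KalmanAlgebra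

theorem enkf_update_moments_general {n p : ℕ} {Ω : Type*} [MeasurableSpace Ω]
    (P : Measure Ω) [IsProbabilityMeasure P]
    (Xb : Ω → Fin n → ℝ) (Wb : Ω → Fin p → ℝ)
    (hX2 : ∀ i, MemLp (fun ω => Xb ω i) 2 P)
    (hW2 : ∀ j, MemLp (fun ω => Wb ω j) 2 P)
    (m : Fin n → ℝ) (hmean : ∀ i, ∫ ω, Xb ω i ∂P = m i)
    (S : Matrix (Fin n) (Fin n) ℝ)
    (hcov : ∀ i j, ∫ ω, (Xb ω i - m i) * (Xb ω j - m j) ∂P = S i j)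
    (hWmean : ∀ j, ∫ ω, Wb ω j ∂P = 0)
    (R : Matrix (Fin p) (Fin p) ℝ)
    (hWcov : ∀ i j, ∫ ω, Wb ω i * Wb ω j ∂P = R i j)
    (hindep : IndepFun Xb Wb P)
    (H : Matrix (Fin p) (Fin n) ℝ) (hinv : IsUnit (H * S * Hᵀ + R))
    (K : Matrix (Fin n) (Fin p) ℝ) (hK : K = S * Hᵀ * (H * S * Hᵀ + R)⁻¹)
    (Yb : Ω → Fin p → ℝ) (hYb : Yb = fun ω => H.mulVec (Xb ω) + Wb ω)
    (y : Fin p → ℝ) :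
    (∀ i, ∫ ω, (Xb ω + K.mulVec (y - Yb ω)) i ∂P
        = (m + K.mulVec (y - H.mulVec m)) i) ∧
    (∀ i j, ∫ ω, ((Xb ω + K.mulVec (y - Yb ω)) i - (m + K.mulVec (y - H.mulVec m)) i)
          * ((Xb ω + K.mulVec (y - Yb ω)) j - (m + K.mulVec (y - H.mulVec m)) j) ∂P
        = (S - S * Hᵀ * (H * S * Hᵀ + R)⁻¹ * H * S) i j) := by
  set D : Ω → Fin n → ℝ := fun ω => Xb ω - m
  have hD2 : ∀ i, MemLp (fun ω => D ω i) 2 P := fun i => (hX2 i).sub (memLp_const (m i))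
  have hD0 : ∀ i, ∫ ω, D ω i ∂P = 0 := fun i => by
    change ∫ ω, Xb ω i - m i ∂P = 0
    rw [integral_sub ((hX2 i).integrable one_le_two) (integrable_const _), hmean]
    simp
  have hupdate : ∀ ω, Xb ω + K *ᵥ (y - Yb ω)
      = m + K *ᵥ (y - H *ᵥ m) + ((1 - K * H) *ᵥ D ω - K *ᵥ Wb ω) := fun ω => by
    rw [hYb]; exact kalman_update_eq_add H K (Xb ω) m (Wb ω) y
  refine ⟨fun i => ?_, fun i j => ?_⟩
  · simp_rw [hupdate]
    exact integral_add_mulVec_sub_mulVec_apply (fun i => (hD2 i).integrable one_le_two)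
      (fun j => (hW2 j).integrable one_le_two) hD0 hWmean _ _ _ i
  have hDW : crossMoment P D Wb = 0 :=
    crossMoment_eq_zero_of_indepFun (hindep.comp (measurable_id.sub_const m) measurable_id)
      (fun i => (hD2 i).aestronglyMeasurable) (fun j => (hW2 j).aestronglyMeasurable) hD0
  have hWD : crossMoment P Wb D = 0 :=
    crossMoment_eq_zero_of_indepFun (hindep.symm.comp measurable_id (measurable_id.sub_const m))
      (fun j => (hW2 j).aestronglyMeasurable) (fun i => (hD2 i).aestronglyMeasurable) hWmean
  have hgain : K * (H * S * Hᵀ + R) = S * Hᵀ := by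
    rw [hK]
    exact nonsing_inv_mul_cancel_right _ _ ((isUnit_iff_isUnit_det _).mp hinv)
  have hcov' := crossMoment_mulVec_sub_mulVec hD2 hW2 hDW hWD (1 - K * H) K
  rw [show crossMoment P D D = S from Matrix.ext hcov, show crossMoment P Wb Wb = R from
    Matrix.ext hWcov, kalman_joseph_form S R H K hgain] at hcov'
  simp_rw [hupdate, Pi.add_apply, add_sub_cancel_left]
  rw [hK] at hcov' ⊢
  exact congrFun (congrFun hcov' i) j

/-- **First two moments of the EnKF update (no Gaussianity assumed).**
Let `X̄` be square-integrable on `ℝ^n` with mean `m` and covariance `Σ`, and `W̄`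
square-integrable on `ℝ^m`, independent of `X̄`, with mean `0` and covariance `R`.
With `Ȳ = H X̄ + W̄`, `K = Σ Hᵀ (H Σ Hᵀ + R)⁻¹` (assuming `H Σ Hᵀ + R` invertible),
the random vector `X̄_{|y} = X̄ + K (y − Ȳ)` has mean `m + K(y − Hm)` and covariance
`Σ − Σ Hᵀ (H Σ Hᵀ + R)⁻¹ H Σ`, for every `y`. -/
theorem enkf_update_moments {n p : ℕ} {Ω : Type*} [MeasurableSpace Ω]
    (P : Measure Ω) [IsProbabilityMeasure P]
    (Xb : Ω → Fin n → ℝ) (Wb : Ω → Fin p → ℝ)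
    (hXbm : Measurable Xb) (hWbm : Measurable Wb)
    (hX2 : ∀ i, MemLp (fun ω => Xb ω i) 2 P)
    (hW2 : ∀ j, MemLp (fun ω => Wb ω j) 2 P)
    (m : Fin n → ℝ) (hmean : ∀ i, ∫ ω, Xb ω i ∂P = m i)
    (S : Matrix (Fin n) (Fin n) ℝ)
    (hcov : ∀ i j, ∫ ω, (Xb ω i - m i) * (Xb ω j - m j) ∂P = S i j)
    (hWmean : ∀ j, ∫ ω, Wb ω j ∂P = 0)
    (R : Matrix (Fin p) (Fin p) ℝ)
    (hWcov : ∀ i j, ∫ ω, Wb ω i * Wb ω j ∂P = R i j)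
    (hindep : IndepFun Xb Wb P)
    (H : Matrix (Fin p) (Fin n) ℝ) (hinv : IsUnit (H * S * Hᵀ + R))
    (K : Matrix (Fin n) (Fin p) ℝ) (hK : K = S * Hᵀ * (H * S * Hᵀ + R)⁻¹)
    (Yb : Ω → Fin p → ℝ) (hYb : Yb = fun ω => H.mulVec (Xb ω) + Wb ω)
    (y : Fin p → ℝ) :
    (∀ i, ∫ ω, (Xb ω + K.mulVec (y - Yb ω)) i ∂P
        = (m + K.mulVec (y - H.mulVec m)) i) ∧
    (∀ i j, ∫ ω, ((Xb ω + K.mulVec (y - Yb ω)) i - (m + K.mulVec (y - H.mulVec m)) i)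
          * ((Xb ω + K.mulVec (y - Yb ω)) j - (m + K.mulVec (y - H.mulVec m)) j) ∂P
        = (S - S * Hᵀ * (H * S * Hᵀ + R)⁻¹ * H * S) i j) :=
  enkf_update_moments_general P Xb Wb hX2 hW2 m hmean S hcov hWmean R hWcov hindep H hinv K hK Yb
    hYb y
end

section
/- Let (X, Y) be jointly distributed random vectors on ℝ^n × ℝ^m, and let X̄ be a random vector with the same law P_X as X and independent of Y. Let T : ℝ^n × ℝ^m → ℝ^n be a measurable map such that the pair (T(X̄, Y), Y) has the same joint law as (X, Y). Then for P_Y-almost every y, the pushforward measure T(·, y)_# P_X equals the conditional distribution P_{X|Y}(·|y) of X given Y = y. -/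
/-!
By independence the law of `(Y, X̄)` is `P_Y ⊗ P_X`, so by Fubini the law of `(Y, T(X̄, Y))` is
the composition product of `P_Y` with the kernel `y ↦ T(·, y)_# P_X`. By hypothesis this is also
the law of `(Y, X)`, and a disintegration of a joint law along its first marginal is unique
`P_Y`-almost everywhere.
-/

open MeasureTheory ProbabilityTheory

namespace ProbabilityTheory

variable {Ω β γ δ : Type*} [MeasurableSpace Ω] [MeasurableSpace β] [MeasurableSpace γ]
  [MeasurableSpace δ]

lemma Kernel.map_const_prod_id_apply (ν : Measure γ) [SFinite ν] {f : γ × β → δ}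
    (hf : Measurable f) (b : β) :
    (Kernel.const β ν ×ₖ Kernel.id).map f b = ν.map fun c => f (c, b) := by
  rw [Kernel.map_apply _ hf, Kernel.prod_apply, Kernel.const_apply, Kernel.id_apply,
    Measure.prod_dirac, Measure.map_map hf measurable_prodMk_right]
  rfl

lemma Measure.map_prod_eq_compProd_map_const_prod_id (μ : Measure β) (ν : Measure γ) [SFinite μ]
    [SFinite ν] {f : γ × β → δ} (hf : Measurable f) :
    (μ.prod ν).map (fun p => (p.1, f (p.2, p.1))) =
      μ ⊗ₘ (Kernel.const β ν ×ₖ Kernel.id).map f := by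
  have hg : Measurable fun p : β × γ => (p.1, f (p.2, p.1)) := by fun_prop
  ext s hs
  rw [Measure.map_apply hg hs, Measure.compProd_apply hs, Measure.prod_apply (hg hs)]
  refine lintegral_congr fun b => ?_
  rw [Kernel.map_const_prod_id_apply ν hf, Measure.map_apply (by fun_prop)
    (measurable_prodMk_left hs)]
  rfl

variable [StandardBorelSpace δ] [Nonempty δ] {μ : Measure Ω} [IsFiniteMeasure μ]

lemma condDistrib_ae_eq_of_map_prod_eq {X X' : Ω → δ} {Y : Ω → β}
    (hX : AEMeasurable X μ) (hX' : AEMeasurable X' μ) (hY : AEMeasurable Y μ)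
    (h : μ.map (fun ω => (X ω, Y ω)) = μ.map (fun ω => (X' ω, Y ω))) :
    condDistrib X Y μ =ᵐ[μ.map Y] condDistrib X' Y μ := by
  refine condDistrib_ae_eq_of_measure_eq_compProd Y hX ?_
  rw [compProd_map_condDistrib hX']
  have := congrArg (Measure.map Prod.swap) h
  rwa [AEMeasurable.map_map_of_aemeasurable measurable_swap.aemeasurable (hX.prodMk hY),
    AEMeasurable.map_map_of_aemeasurable measurable_swap.aemeasurable (hX'.prodMk hY)] at this

lemma condDistrib_ae_eq_of_indepFun {Y : Ω → β} {Z : Ω → γ} (hY : Measurable Y)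
    (hZ : Measurable Z) (hZY : IndepFun Z Y μ) {f : γ × β → δ} (hf : Measurable f) :
    condDistrib (fun ω => f (Z ω, Y ω)) Y μ =ᵐ[μ.map Y]
      (Kernel.const β (μ.map Z) ×ₖ Kernel.id).map f := by
  refine condDistrib_ae_eq_of_measure_eq_compProd Y (by fun_prop) ?_
  calc μ.map (fun ω => (Y ω, f (Z ω, Y ω)))
      = (μ.map fun ω => (Y ω, Z ω)).map fun p => (p.1, f (p.2, p.1)) := by
        rw [Measure.map_map (by fun_prop) (by fun_prop)]; rfl
    _ = ((μ.map Y).prod (μ.map Z)).map fun p => (p.1, f (p.2, p.1)) := by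
        rw [(indepFun_iff_map_prod_eq_prod_map_map hY.aemeasurable hZ.aemeasurable).1 hZY.symm]
    _ = _ := Measure.map_prod_eq_compProd_map_const_prod_id _ _ hf

end ProbabilityTheory

/-- **From the joint-law condition to the pointwise consistency condition.**
Let `(X, Y)` be jointly distributed on `ℝ^n × ℝ^m`, let `X̄` have the law of `X`
and be independent of `Y`, and let `T` be a measurable map such that
`(T(X̄, Y), Y)` has the same joint law as `(X, Y)`. Then for `P_Y`-a.e. `y`,
the pushforward `T(·, y)_# P_X` equals the conditional distribution of `X`
given `Y = y`. -/
theorem pushforward_eq_condDistrib_of_joint_law {n m : ℕ} {Ω : Type*} [MeasurableSpace Ω]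
    (P : Measure Ω) [IsProbabilityMeasure P]
    (X : Ω → Fin n → ℝ) (Y : Ω → Fin m → ℝ)
    (hXm : Measurable X) (hYm : Measurable Y)
    (Xb : Ω → Fin n → ℝ) (hXbm : Measurable Xb)
    (hXblaw : P.map Xb = P.map X) (hXbY : IndepFun Xb Y P)
    (T : (Fin n → ℝ) → (Fin m → ℝ) → (Fin n → ℝ))
    (hTm : Measurable fun q : (Fin n → ℝ) × (Fin m → ℝ) => T q.1 q.2)
    (hjoint : P.map (fun ω => (T (Xb ω) (Y ω), Y ω)) = P.map (fun ω => (X ω, Y ω))) :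
    ∀ᵐ y ∂(P.map Y), (P.map X).map (fun x => T x y) = condDistrib X Y P y := by
  have hTXb : Measurable fun ω => T (Xb ω) (Y ω) := hTm.comp (hXbm.prodMk hYm)
  filter_upwards [condDistrib_ae_eq_of_map_prod_eq hXm.aemeasurable hTXb.aemeasurable
      hYm.aemeasurable hjoint.symm, condDistrib_ae_eq_of_indepFun hYm hXbm hXbY hTm]
    with y hXY hTY
  rw [hXY, hTY, Kernel.map_const_prod_id_apply _ hTm, hXblaw]
end
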